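/- If a graph G satisfies ex(G) ≥ s+1, then G contains a subgraph H that is leafless (no vertices of degree 1), has excess exactly s+1, and in which every connected component has cyclomatic number at least 2. -/

import Mathlib

/-!
Choose an edge set `F` minimal under inclusion with excess at least `s + 1`. Deleting one edge
lowers the excess by at most one, so the excess of `F` is exactly `s + 1`. Deleting a pendant edge,
or a whole component with no more edges than vertices, does not lower the excess at all: an optimal
acyclic-or-unicyclic subgraph of what remains stays so when that edge or component is added back.
By minimality, `F` has neither leaves nor components of cyclomatic number at most one.
-/

namespace CuckooStash

variable {V E : Type*} [Fintype V] [DecidableEq V] [Fintype E] [DecidableEq E]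

/-- Adjacency relation induced by the edges in `F` of a multigraph with endpoint map `ends`. -/
def adjOn (ends : E → V × V) (F : Finset E) (u v : V) : Prop :=
  ∃ e ∈ F, ends e = (u, v) ∨ ends e = (v, u)

/-- The setoid whose classes are the connected components (isolated vertices form
    their own components). -/
def compSetoid (ends : E → V × V) (F : Finset E) : Setoid V :=
  Relation.EqvGen.setoid (adjOn ends F)

/-- The number of connected components (isolated vertices count as components). -/
noncomputable def zeta (ends : E → V × V) (F : Finset E) : ℕ :=
  Nat.card (Quotient (compSetoid ends F))

/-- The cyclomatic number `γ = m - n + ζ`. -/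
noncomputable def gamma (ends : E → V × V) (F : Finset E) : ℕ :=
  F.card + zeta ends F - Fintype.card V

open Classical in
/-- The degree of a vertex (a self-loop counts twice). -/
noncomputable def deg (ends : E → V × V) (F : Finset E) (v : V) : ℕ :=
  (F.filter (fun e => (ends e).1 = v)).card + (F.filter (fun e => (ends e).2 = v)).card

open Classical in
/-- The vertex set of the connected component of `v`. -/
noncomputable def compVerts (ends : E → V × V) (F : Finset E) (v : V) : Finset V :=
  Finset.univ.filter (fun u => Relation.EqvGen (adjOn ends F) v u)

open Classical in
/-- The edge set of the connected component of `v`. -/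
noncomputable def compEdges (ends : E → V × V) (F : Finset E) (v : V) : Finset E :=
  F.filter (fun e => Relation.EqvGen (adjOn ends F) v (ends e).1)

/-- Every connected component is acyclic or unicyclic. -/
def GoodComponents (ends : E → V × V) (F : Finset E) : Prop :=
  ∀ v, (compEdges ends F v).card ≤ (compVerts ends F v).card

/-- The excess: the minimum number of edges one has to remove from `F` so that all
    connected components of the remaining graph are acyclic or unicyclic. -/
noncomputable def excess (ends : E → V × V) (F : Finset E) : ℕ :=
  sInf {d : ℕ | ∃ F' ⊆ F, F'.card + d = F.card ∧ GoodComponents ends F'}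

/-- The number of connected components that contain a cycle. -/
noncomputable def zetaCyc (ends : E → V × V) (F : Finset E) : ℕ :=
  Nat.card {c : Quotient (compSetoid ends F) //
    ∃ v, Quotient.mk (compSetoid ends F) v = c ∧
      (compVerts ends F v).card ≤ (compEdges ends F v).card}

/-- A graph is acyclic iff every edge is a bridge. -/
def Acyclic (ends : E → V × V) (F : Finset E) : Prop :=
  ∀ e ∈ F, zeta ends (F.erase e) = zeta ends F + 1

/-- `e` is a cycle edge of `F`: removing it does not disconnect anything. -/
def CycleEdge (ends : E → V × V) (F : Finset E) (e : E) : Prop :=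
  e ∈ F ∧ zeta ends (F.erase e) = zeta ends F

end CuckooStash

open CuckooStash

lemma Finset.exists_only_of_card_filter_eq_one {α : Type*} {s : Finset α}
    {p q : α → Prop} [DecidablePred p] [DecidablePred q]
    (hp : (s.filter p).card = 1) (hq : (s.filter q).card = 0) :
    ∃ a ∈ s, p a ∧ ¬ q a ∧ ∀ b ∈ s, b ≠ a → ¬ p b ∧ ¬ q b := by
  obtain ⟨a, ha⟩ := Finset.card_eq_one.1 hp
  have hq' := Finset.filter_eq_empty_iff.1 (Finset.card_eq_zero.1 hq)
  obtain ⟨has, hpa⟩ := Finset.mem_filter.1 (ha ▸ Finset.mem_singleton_self a)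
  refine ⟨a, has, hpa, hq' has, fun b hb hba => ⟨fun hpb => hba ?_, hq' hb⟩⟩
  exact Finset.mem_singleton.1 (ha ▸ Finset.mem_filter.2 ⟨hb, hpb⟩)

namespace CuckooStash

variable {V E : Type*} {ends : E → V × V}

section Connectivity

lemma eqvGen_adjOn_mono {F G : Finset E} (hFG : F ⊆ G) {p q : V}
    (h : Relation.EqvGen (adjOn ends F) p q) : Relation.EqvGen (adjOn ends G) p q :=
  Relation.EqvGen.mono (fun _ _ ⟨e, he, hends⟩ => ⟨e, hFG he, hends⟩) p q h

lemma eqvGen_adjOn_ends {F : Finset E} {e : E} (he : e ∈ F) :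
    Relation.EqvGen (adjOn ends F) (ends e).1 (ends e).2 :=
  .rel _ _ ⟨e, he, .inl rfl⟩

variable (ends) in
/-- `P` holds on a union of connected components of `F`. -/
def EdgeInvariant (F : Finset E) (P : V → Prop) : Prop :=
  ∀ e ∈ F, P (ends e).1 ↔ P (ends e).2

namespace EdgeInvariant

variable {F G : Finset E} {P : V → Prop}

lemma mono (hP : EdgeInvariant ends F P) (hGF : G ⊆ F) : EdgeInvariant ends G P :=
  fun e he => hP e (hGF he)

lemma not (hP : EdgeInvariant ends F P) : EdgeInvariant ends F (fun x => ¬ P x) :=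
  fun e he => not_congr (hP e he)

lemma iff_of_adjOn (hP : EdgeInvariant ends F P) {p q : V} (h : adjOn ends F p q) :
    P p ↔ P q := by
  obtain ⟨e, he, hends | hends⟩ := h
  · simpa [hends] using hP e he
  · simpa [hends] using (hP e he).symm

lemma iff_of_eqvGen (hP : EdgeInvariant ends F P) {p q : V}
    (h : Relation.EqvGen (adjOn ends F) p q) : P p ↔ P q :=
  (Equivalence.eqvGen_iff (r := fun a b => P a ↔ P b)
    ⟨fun _ => Iff.rfl, Iff.symm, Iff.trans⟩).1
    (Relation.EqvGen.mono (fun _ _ => hP.iff_of_adjOn) p q h)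

lemma eqvGen_filter [DecidablePred P] (hP : EdgeInvariant ends F P) {p q : V}
    (h : Relation.EqvGen (adjOn ends F) p q) (hp : P p) :
    Relation.EqvGen (adjOn ends (F.filter fun e => P (ends e).1)) p q := by
  suffices (P p ↔ P q) ∧
      (P p → Relation.EqvGen (adjOn ends (F.filter fun e => P (ends e).1)) p q) from this.2 hp
  clear hp
  induction h with
  | rel a b hadj =>
    have hab : P a ↔ P b := hP.iff_of_adjOn hadj
    obtain ⟨e, he, hends⟩ := hadj
    refine ⟨hab, fun ha => .rel _ _ ⟨e, Finset.mem_filter.2 ⟨he, ?_⟩, hends⟩⟩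
    rcases hends with hends | hends <;> simp [hends, ha, hab.1 ha]
  | refl a => exact ⟨Iff.rfl, fun _ => .refl a⟩
  | symm a b _ ih => exact ⟨ih.1.symm, fun hb => .symm _ _ (ih.2 (ih.1.2 hb))⟩
  | trans a b c _ _ ihab ihbc =>
    exact ⟨ihab.1.trans ihbc.1, fun ha => .trans _ _ _ (ihab.2 ha) (ihbc.2 (ihab.1.1 ha))⟩

end EdgeInvariant

end Connectivity

lemma compEdges_subset {F : Finset E} {v : V} : compEdges ends F v ⊆ F := by
  classical
  exact fun _ he => (Finset.mem_filter.1 he).1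

section Components

variable [Fintype V] {F : Finset E} {v w : V}

lemma mem_compVerts {u : V} : u ∈ compVerts ends F v ↔ Relation.EqvGen (adjOn ends F) v u := by
  simp [compVerts]

lemma mem_compEdges {e : E} :
    e ∈ compEdges ends F v ↔ e ∈ F ∧ (ends e).1 ∈ compVerts ends F v := by
  simp [compEdges, mem_compVerts]

lemma compVerts_eq_of_eqvGen (h : Relation.EqvGen (adjOn ends F) v w) :
    compVerts ends F w = compVerts ends F v := by
  ext u
  simp only [mem_compVerts]
  exact ⟨(h.trans _ _ _ ·), ((h.symm _ _).trans _ _ _ ·)⟩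

lemma compEdges_eq_of_eqvGen (h : Relation.EqvGen (adjOn ends F) v w) :
    compEdges ends F w = compEdges ends F v := by
  ext e
  rw [mem_compEdges, mem_compEdges, compVerts_eq_of_eqvGen h]

lemma compEdges_eq_filter [DecidableEq V] :
    compEdges ends F v = F.filter fun e => (ends e).1 ∈ compVerts ends F v := by
  ext e
  rw [mem_compEdges, Finset.mem_filter]

lemma edgeInvariant_mem_compVerts : EdgeInvariant ends F (· ∈ compVerts ends F v) := by
  intro e he
  simp only [mem_compVerts]
  exact ⟨(·.trans _ _ _ (eqvGen_adjOn_ends he)),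
    (·.trans _ _ _ (.symm _ _ (eqvGen_adjOn_ends he)))⟩

lemma notMem_compVerts_of_isolated {u v : V} (huv : u ≠ v)
    (hv : ∀ e' ∈ F, (ends e').1 ≠ v ∧ (ends e').2 ≠ v) : v ∉ compVerts ends F u := by
  have hvIsolated : EdgeInvariant ends F (· = v) :=
    fun e' he' => iff_of_false (hv e' he').1 (hv e' he').2
  exact fun h => huv ((hvIsolated.iff_of_eqvGen (mem_compVerts.1 h)).2 rfl)

lemma compEdges_nonempty_of_deg_ne_zero [DecidableEq V] (h : deg ends F v ≠ 0) :
    (compEdges ends F v).Nonempty := by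
  obtain ⟨e, he, hv⟩ : ∃ e ∈ F, (ends e).1 = v ∨ (ends e).2 = v := by
    by_contra! hF
    simp_all [deg]
  refine ⟨e, mem_compEdges.2 ⟨he, mem_compVerts.2 ?_⟩⟩
  rcases hv with rfl | rfl
  · exact .refl _
  · exact .symm _ _ (eqvGen_adjOn_ends he)

namespace EdgeInvariant

variable {P : V → Prop} [DecidablePred P]

lemma compVerts_filter (hP : EdgeInvariant ends F P) (hw : P w) :
    compVerts ends (F.filter fun e => P (ends e).1) w = compVerts ends F w := by
  ext u
  simp only [mem_compVerts]
  exact ⟨eqvGen_adjOn_mono (Finset.filter_subset _ _), (hP.eqvGen_filter · hw)⟩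

lemma compEdges_filter (hP : EdgeInvariant ends F P) (hw : P w) :
    compEdges ends (F.filter fun e => P (ends e).1) w = compEdges ends F w := by
  ext e
  rw [mem_compEdges, mem_compEdges, hP.compVerts_filter hw, Finset.mem_filter, and_assoc,
    and_iff_right_of_imp fun h => (hP.iff_of_eqvGen (mem_compVerts.1 h)).1 hw]

end EdgeInvariant

end Components

section Goodness

variable [Fintype V]

lemma goodComponents_empty : GoodComponents ends (∅ : Finset E) :=
  fun _ => by simp [compEdges]

variable [DecidableEq V]

lemma ends_mem_insert_compVerts {F : Finset E} {e : E} {u v : V}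
    (hends : ends e = (v, u) ∨ ends e = (u, v)) :
    (ends e).1 ∈ insert v (compVerts ends F u) ∧
      (ends e).2 ∈ insert v (compVerts ends F u) := by
  rcases hends with h | h <;> simp [h, mem_compVerts, Relation.EqvGen.refl]

variable [DecidableEq E]

lemma GoodComponents.union_compEdges {F F' : Finset E} {v : V}
    (hgood : GoodComponents ends F') (hF' : F' ⊆ F \ compEdges ends F v)
    (hv : (compEdges ends F v).card ≤ (compVerts ends F v).card) :
    GoodComponents ends (F' ∪ compEdges ends F v) := by
  set C := compEdges ends F v
  have hP : EdgeInvariant ends (F' ∪ C) (· ∈ compVerts ends F v) :=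
    edgeInvariant_mem_compVerts.mono
      (Finset.union_subset (hF'.trans Finset.sdiff_subset) compEdges_subset)
  have hF'out : ∀ e ∈ F', (ends e).1 ∉ compVerts ends F v := fun e he h =>
    (Finset.mem_sdiff.1 (hF' he)).2 (mem_compEdges.2 ⟨(Finset.mem_sdiff.1 (hF' he)).1, h⟩)
  have hCin : ∀ e ∈ C, (ends e).1 ∈ compVerts ends F v := fun e he => (mem_compEdges.1 he).2
  intro w
  by_cases hw : w ∈ compVerts ends F v
  · have hfilter : (F' ∪ C).filter (fun e => (ends e).1 ∈ compVerts ends F v) =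
        F.filter (fun e => (ends e).1 ∈ compVerts ends F v) := by
      rw [Finset.filter_union, Finset.filter_false_of_mem hF'out, Finset.empty_union,
        Finset.filter_true_of_mem hCin]
      exact compEdges_eq_filter
    rw [← hP.compVerts_filter hw, ← hP.compEdges_filter hw, hfilter,
      edgeInvariant_mem_compVerts.compVerts_filter hw,
      edgeInvariant_mem_compVerts.compEdges_filter hw,
      compVerts_eq_of_eqvGen (mem_compVerts.1 hw), compEdges_eq_of_eqvGen (mem_compVerts.1 hw)]
    exact hv
  · have hfilter : (F' ∪ C).filter (fun e => (ends e).1 ∉ compVerts ends F v) = F' := by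
      rw [Finset.filter_union, Finset.filter_true_of_mem hF'out,
        Finset.filter_false_of_mem fun e he h => h (hCin e he), Finset.union_empty]
    rw [← hP.not.compVerts_filter hw, ← hP.not.compEdges_filter hw, hfilter]
    exact hgood w

section Pendant

variable {F : Finset E} {e : E} {u v : V}

lemma edgeInvariant_insert_pendant (hends : ends e = (v, u) ∨ ends e = (u, v))
    (hv : ∀ e' ∈ F, (ends e').1 ≠ v ∧ (ends e').2 ≠ v) :
    EdgeInvariant ends (insert e F) (· ∈ insert v (compVerts ends F u)) := by
  intro e' he'
  rcases Finset.mem_insert.1 he' with rfl | he'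
  · exact iff_of_true (ends_mem_insert_compVerts hends).1 (ends_mem_insert_compVerts hends).2
  · simp only [Finset.mem_insert, (hv e' he').1, (hv e' he').2, false_or]
    exact edgeInvariant_mem_compVerts e' he'

lemma compVerts_insert_pendant (hends : ends e = (v, u) ∨ ends e = (u, v))
    (hv : ∀ e' ∈ F, (ends e').1 ≠ v ∧ (ends e').2 ≠ v) :
    compVerts ends (insert e F) v = insert v (compVerts ends F u) := by
  ext x
  rw [mem_compVerts]
  refine ⟨fun h => ((edgeInvariant_insert_pendant hends hv).iff_of_eqvGen h).1
    (Finset.mem_insert_self _ _), fun hx => ?_⟩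
  rcases Finset.mem_insert.1 hx with rfl | hx
  · exact .refl _
  · exact .trans _ _ _ (.rel _ _ ⟨e, Finset.mem_insert_self _ _, hends⟩)
      (eqvGen_adjOn_mono (Finset.subset_insert _ _) (mem_compVerts.1 hx))

lemma compEdges_insert_pendant (hends : ends e = (v, u) ∨ ends e = (u, v))
    (hv : ∀ e' ∈ F, (ends e').1 ≠ v ∧ (ends e').2 ≠ v) :
    compEdges ends (insert e F) v = insert e (compEdges ends F u) := by
  rw [compEdges_eq_filter, compVerts_insert_pendant hends hv, Finset.filter_insert,
    if_pos (ends_mem_insert_compVerts hends).1,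
    compEdges_eq_filter]
  exact congrArg _ (Finset.filter_congr fun e' he' => by simp [(hv e' he').1])

lemma GoodComponents.insert_pendant (hgood : GoodComponents ends F) (he : e ∉ F) (huv : u ≠ v)
    (hends : ends e = (v, u) ∨ ends e = (u, v))
    (hv : ∀ e' ∈ F, (ends e').1 ≠ v ∧ (ends e').2 ≠ v) :
    GoodComponents ends (insert e F) := by
  have hP := edgeInvariant_insert_pendant hends hv
  intro w
  by_cases hw : w ∈ insert v (compVerts ends F u)
  · have hwv := mem_compVerts.1 ((compVerts_insert_pendant hends hv).symm ▸ hw)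
    rw [compVerts_eq_of_eqvGen hwv, compEdges_eq_of_eqvGen hwv, compVerts_insert_pendant hends hv,
      compEdges_insert_pendant hends hv,
      Finset.card_insert_of_notMem (fun h => he (compEdges_subset h)),
      Finset.card_insert_of_notMem (notMem_compVerts_of_isolated huv hv)]
    exact Nat.add_le_add_right (hgood u) 1
  · have hfilter : (insert e F).filter (fun e' => (ends e').1 ∉ insert v (compVerts ends F u)) =
        F.filter (fun e' => (ends e').1 ∉ insert v (compVerts ends F u)) := by
      rw [Finset.filter_insert, if_neg (not_not_intro (ends_mem_insert_compVerts hends).1)]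
    have hPF := (hP.mono (Finset.subset_insert e F)).not
    rw [← hP.not.compVerts_filter hw, ← hP.not.compEdges_filter hw, hfilter,
      hPF.compVerts_filter hw, hPF.compEdges_filter hw]
    exact hgood w

end Pendant

end Goodness

section Degree

variable [DecidableEq V] {F : Finset E} {v : V}

lemma exists_pendant_of_deg_eq_one (h : deg ends F v = 1) :
    ∃ e ∈ F, ∃ u, u ≠ v ∧ (ends e = (v, u) ∨ ends e = (u, v)) ∧
      ∀ e' ∈ F, e' ≠ e → (ends e').1 ≠ v ∧ (ends e').2 ≠ v := by
  unfold deg at h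
  rcases (by omega : (F.filter fun e => (ends e).1 = v).card = 1 ∧
      (F.filter fun e => (ends e).2 = v).card = 0 ∨
      (F.filter fun e => (ends e).2 = v).card = 1 ∧
      (F.filter fun e => (ends e).1 = v).card = 0) with ⟨h1, h2⟩ | ⟨h2, h1⟩
  · obtain ⟨e, he, hv, hu, honly⟩ := Finset.exists_only_of_card_filter_eq_one h1 h2
    exact ⟨e, he, (ends e).2, hu, .inl (Prod.ext hv rfl), honly⟩
  · obtain ⟨e, he, hv, hu, honly⟩ := Finset.exists_only_of_card_filter_eq_one h2 h1
    exact ⟨e, he, (ends e).1, hu, .inr (Prod.ext rfl hv),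
      fun e' he' hne => (honly e' he' hne).symm⟩

end Degree

section Excess

variable [Fintype V] {F : Finset E}

lemma excess_le_of_goodComponents {F' : Finset E} {d : ℕ} (hF' : F' ⊆ F)
    (hcard : F'.card + d = F.card) (hgood : GoodComponents ends F') : excess ends F ≤ d :=
  Nat.sInf_le ⟨F', hF', hcard, hgood⟩

lemma exists_goodComponents_card_add_excess (F : Finset E) :
    ∃ F' ⊆ F, F'.card + excess ends F = F.card ∧ GoodComponents ends F' :=
  Nat.sInf_mem (s := {d | ∃ F' ⊆ F, F'.card + d = F.card ∧ GoodComponents ends F'})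
    ⟨F.card, ∅, F.empty_subset, by simp, goodComponents_empty⟩

lemma excess_empty : excess ends (∅ : Finset E) = 0 :=
  Nat.le_zero.1 (excess_le_of_goodComponents subset_rfl (by simp) goodComponents_empty)

variable [DecidableEq E]

lemma excess_le_excess_erase_add_one {e : E} (he : e ∈ F) :
    excess ends F ≤ excess ends (F.erase e) + 1 := by
  obtain ⟨F', hF', hcard, hgood⟩ :=
    exists_goodComponents_card_add_excess (ends := ends) (F.erase e)
  refine excess_le_of_goodComponents (hF'.trans (F.erase_subset e)) ?_ hgood
  rw [Finset.card_erase_of_mem he] at hcard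
  have := Finset.card_pos.2 ⟨e, he⟩
  omega

variable [DecidableEq V]

lemma excess_le_excess_erase_of_pendant {e : E} {u v : V} (he : e ∈ F) (huv : u ≠ v)
    (hends : ends e = (v, u) ∨ ends e = (u, v))
    (hv : ∀ e' ∈ F, e' ≠ e → (ends e').1 ≠ v ∧ (ends e').2 ≠ v) :
    excess ends F ≤ excess ends (F.erase e) := by
  obtain ⟨F', hF', hcard, hgood⟩ :=
    exists_goodComponents_card_add_excess (ends := ends) (F.erase e)
  have heF' : e ∉ F' := fun h => (Finset.mem_erase.1 (hF' h)).1 rfl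
  have hv' : ∀ e' ∈ F', (ends e').1 ≠ v ∧ (ends e').2 ≠ v := fun e' he' =>
    hv e' (Finset.mem_erase.1 (hF' he')).2 (Finset.mem_erase.1 (hF' he')).1
  refine excess_le_of_goodComponents (Finset.insert_subset he (hF'.trans (F.erase_subset e))) ?_
    (hgood.insert_pendant heF' huv hends hv')
  rw [Finset.card_insert_of_notMem heF', ← Finset.card_erase_add_one he]
  omega

lemma excess_le_excess_sdiff_compEdges {v : V}
    (hv : (compEdges ends F v).card ≤ (compVerts ends F v).card) :
    excess ends F ≤ excess ends (F \ compEdges ends F v) := by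
  obtain ⟨F', hF', hcard, hgood⟩ :=
    exists_goodComponents_card_add_excess (ends := ends) (F \ compEdges ends F v)
  have hdisj : Disjoint F' (compEdges ends F v) :=
    Finset.disjoint_left.2 fun _ he => (Finset.mem_sdiff.1 (hF' he)).2
  refine excess_le_of_goodComponents
    (Finset.union_subset (hF'.trans Finset.sdiff_subset) compEdges_subset) ?_
    (hgood.union_compEdges hF' hv)
  have := Finset.card_sdiff_add_card_eq_card (compEdges_subset (ends := ends) (F := F) (v := v))
  rw [Finset.card_union_of_disjoint hdisj]
  omega

end Excess

end CuckooStash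

/-- If a multigraph `G` has excess at least `s+1`, then it contains a subgraph
(given by an edge subset `F'`) that is leafless (no vertex of degree 1), has excess
exactly `s+1`, and in which every connected component (of a non-isolated vertex) has
cyclomatic number at least 2. -/
theorem stmt_9 {V E : Type*} [Fintype V] [DecidableEq V] [Fintype E] [DecidableEq E]
    (ends : E → V × V) (s : ℕ)
    (h : s + 1 ≤ excess ends Finset.univ) :
    ∃ F' : Finset E,
      (∀ v, deg ends F' v ≠ 1) ∧
      excess ends F' = s + 1 ∧
      (∀ v : V, deg ends F' v ≠ 0 →
        (compVerts ends F' v).card + 1 ≤ (compEdges ends F' v).card) := by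
  obtain ⟨F, hF, hmin⟩ := wellFounded_lt.has_min {G : Finset E | s + 1 ≤ excess ends G}
    ⟨Finset.univ, h⟩
  replace hF : s + 1 ≤ excess ends F := hF
  have hsmaller : ∀ G ⊂ F, excess ends G ≤ s := fun G hG => by
    by_contra! hG'
    exact hmin G hG' hG
  obtain ⟨e, he⟩ : F.Nonempty := Finset.nonempty_iff_ne_empty.2 fun hF0 => by
    simp [hF0, excess_empty] at hF
  refine ⟨F, fun v hv => ?_, ?_, fun v hv => ?_⟩
  · obtain ⟨e, he, u, huv, hends, honly⟩ := exists_pendant_of_deg_eq_one hv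
    have := excess_le_excess_erase_of_pendant he huv hends honly
    have := hsmaller _ (Finset.erase_ssubset he)
    omega
  · have := excess_le_excess_erase_add_one (ends := ends) he
    have := hsmaller _ (Finset.erase_ssubset he)
    omega
  · by_contra! hgood
    have := excess_le_excess_sdiff_compEdges (Nat.le_of_lt_succ hgood)
    have := hsmaller _
      (Finset.sdiff_ssubset compEdges_subset (compEdges_nonempty_of_deg_ne_zero hv))
    omega
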